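/- arXiv:2509.04134 — 2 statements merged into one kernel-verified Lean document; each statement's English description precedes it below -/
import Mathlib

section
/- Let A be a unital C*-algebra and h₁, h₂ ∈ A self-adjoint. Then ‖h₁ - h₂‖·(1 - (‖h₁‖+‖h₂‖)/2) ≤ ‖e^{ih₁} - e^{ih₂}‖. -/
/-!
By Duhamel's formula, `e^a - e^b = ∫₀¹ e^{ta} (a - b) e^{(1-t)b} dt`. For `a = i h₁`, `b = i h₂` the
factors `e^{ta}`, `e^{tb}` are unitaries, hence contractions, and `‖e^{ta} - 1‖ ≤ t ‖a‖`. So the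
integrand differs from `a - b` by at most `‖a - b‖ (t ‖a‖ + (1 - t) ‖b‖)`, which integrates to
`‖a - b‖ (‖a‖ + ‖b‖) / 2`, and the triangle inequality gives the bound.
-/

open NormedSpace intervalIntegral Set

section Duhamel

variable {𝔸 : Type*} [NormedRing 𝔸]

theorem norm_mul_mul_sub_le {x y : 𝔸} (d : 𝔸) (hx : ‖x‖ ≤ 1) :
    ‖x * d * y - d‖ ≤ ‖d‖ * (‖x - 1‖ + ‖y - 1‖) :=
  calc ‖x * d * y - d‖ = ‖x * d * (y - 1) + (x - 1) * d‖ := by noncomm_ring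
    _ ≤ ‖x‖ * ‖d‖ * ‖y - 1‖ + ‖x - 1‖ * ‖d‖ := by
      refine (norm_add_le _ _).trans (add_le_add ?_ (norm_mul_le _ _))
      exact (norm_mul_le _ _).trans (by gcongr; exact norm_mul_le _ _)
    _ ≤ ‖d‖ * (‖x - 1‖ + ‖y - 1‖) := by
      nlinarith [mul_le_mul_of_nonneg_right hx (mul_nonneg (norm_nonneg d) (norm_nonneg (y - 1)))]

variable [NormedAlgebra ℝ 𝔸] [CompleteSpace 𝔸]

theorem continuous_exp_smul (a : 𝔸) : Continuous fun t : ℝ => exp (t • a) :=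
  continuous_iff_continuousAt.2 fun t => (hasDerivAt_exp_smul_const a t).continuousAt

theorem hasDerivAt_exp_smul_mul_exp_one_sub_smul (a b : 𝔸) (t : ℝ) :
    HasDerivAt (fun s : ℝ => exp (s • a) * exp ((1 - s) • b))
      (exp (t • a) * (a - b) * exp ((1 - t) • b)) t := by
  have hb : HasDerivAt (fun s : ℝ => exp ((1 - s) • b)) ((-1 : ℝ) • (b * exp ((1 - t) • b))) t :=
    (hasDerivAt_exp_smul_const' b (1 - t)).scomp t ((hasDerivAt_id t).const_sub 1)
  refine ((hasDerivAt_exp_smul_const a t).mul hb).congr_deriv ?_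
  rw [neg_one_smul]
  noncomm_ring

theorem continuous_exp_smul_mul_mul_exp_one_sub_smul (a b d : 𝔸) :
    Continuous fun t : ℝ => exp (t • a) * d * exp ((1 - t) • b) :=
  ((continuous_exp_smul a).mul continuous_const).mul
    ((continuous_exp_smul b).comp (continuous_const.sub continuous_id))

theorem exp_sub_exp_eq_integral (a b : 𝔸) :
    exp a - exp b = ∫ t in (0 : ℝ)..1, exp (t • a) * (a - b) * exp ((1 - t) • b) := by
  rw [integral_eq_sub_of_hasDerivAt (fun t _ => hasDerivAt_exp_smul_mul_exp_one_sub_smul a b t)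
    ((continuous_exp_smul_mul_mul_exp_one_sub_smul a b _).intervalIntegrable 0 1)]
  simp

variable {a b : 𝔸}

theorem norm_exp_sub_one_le (ha : ∀ t ∈ Icc (0 : ℝ) 1, ‖exp (t • a)‖ ≤ 1) :
    ‖exp a - 1‖ ≤ ‖a‖ := by
  have hduhamel := exp_sub_exp_eq_integral a 0
  simp only [exp_zero, sub_zero, smul_zero, mul_one] at hduhamel
  rw [hduhamel]
  refine (norm_integral_le_of_norm_le_const fun t ht =>
    (norm_mul_le _ _).trans <| mul_le_of_le_one_left (norm_nonneg a) <|
      ha t <| Ioc_subset_Icc_self <| by rwa [uIoc_of_le zero_le_one] at ht).trans_eq ?_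
  simp

theorem norm_exp_smul_sub_one_le (ha : ∀ t ∈ Icc (0 : ℝ) 1, ‖exp (t • a)‖ ≤ 1) {t : ℝ}
    (ht : t ∈ Icc (0 : ℝ) 1) : ‖exp (t • a) - 1‖ ≤ t * ‖a‖ := by
  have hta : ∀ s ∈ Icc (0 : ℝ) 1, ‖exp (s • t • a)‖ ≤ 1 := fun s hs => by
    rw [smul_smul]
    exact ha _ ⟨mul_nonneg hs.1 ht.1, mul_le_one₀ hs.2 ht.1 ht.2⟩
  simpa [norm_smul, abs_of_nonneg ht.1] using norm_exp_sub_one_le hta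

theorem integral_mul_add_one_sub_mul (A B : ℝ) :
    ∫ t in (0 : ℝ)..1, (t * A + (1 - t) * B) = (A + B) / 2 := by
  rw [integral_add (intervalIntegrable_id.mul_const _)
    ((intervalIntegrable_const.sub intervalIntegrable_id).mul_const _),
    integral_mul_const, integral_mul_const, integral_comp_sub_left (fun t => t)]
  norm_num
  ring

theorem norm_exp_sub_exp_sub_sub_le (ha : ∀ t ∈ Icc (0 : ℝ) 1, ‖exp (t • a)‖ ≤ 1)
    (hb : ∀ t ∈ Icc (0 : ℝ) 1, ‖exp (t • b)‖ ≤ 1) :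
    ‖exp a - exp b - (a - b)‖ ≤ ‖a - b‖ * ((‖a‖ + ‖b‖) / 2) := by
  have hpointwise : ∀ t ∈ Ioc (0 : ℝ) 1,
      ‖exp (t • a) * (a - b) * exp ((1 - t) • b) - (a - b)‖ ≤
        ‖a - b‖ * (t * ‖a‖ + (1 - t) * ‖b‖) := fun t ht => by
    have ht' : t ∈ Icc (0 : ℝ) 1 := Ioc_subset_Icc_self ht
    refine (norm_mul_mul_sub_le _ (ha t ht')).trans ?_
    gcongr
    · exact norm_exp_smul_sub_one_le ha ht'
    · exact norm_exp_smul_sub_one_le hb ⟨by linarith [ht'.2], by linarith [ht'.1]⟩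
  calc ‖exp a - exp b - (a - b)‖
      = ‖∫ t in (0 : ℝ)..1, (exp (t • a) * (a - b) * exp ((1 - t) • b) - (a - b))‖ := by
        rw [integral_sub ((continuous_exp_smul_mul_mul_exp_one_sub_smul a b _).intervalIntegrable 0 1)
          intervalIntegrable_const, exp_sub_exp_eq_integral]
        simp
    _ ≤ ∫ t in (0 : ℝ)..1, ‖a - b‖ * (t * ‖a‖ + (1 - t) * ‖b‖) :=
        norm_integral_le_of_norm_le zero_le_one (Filter.Eventually.of_forall hpointwise)
          (Continuous.intervalIntegrable (by fun_prop) _ _)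
    _ = ‖a - b‖ * ((‖a‖ + ‖b‖) / 2) := by
        rw [integral_const_mul, integral_mul_add_one_sub_mul]

end Duhamel

theorem norm_exp_smul_I_smul_le_one {A : Type*} [CStarAlgebra A] {h : A} (hh : IsSelfAdjoint h)
    (t : ℝ) : ‖exp (t • Complex.I • h)‖ ≤ 1 := by
  rcases subsingleton_or_nontrivial A with _ | _
  · simp [Subsingleton.elim (exp (t • Complex.I • h)) 0]
  let +nondep : NormedAlgebra ℚ A := .restrictScalars ℚ ℂ A
  exact (CStarRing.norm_of_mem_unitary <| exp_mem_unitary_of_mem_skewAdjoint <|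
    skewAdjoint.smul_mem t <| hh.smul_mem_skewAdjoint Complex.conj_I).le

/-- Lemma `lem:expinequalities`, lower bound.
For self-adjoint elements `h₁ h₂` of a unital C*-algebra `A`,
`‖h₁ - h₂‖ (1 - (‖h₁‖ + ‖h₂‖)/2) ≤ ‖e^{ih₁} - e^{ih₂}‖`. -/
theorem stmt1 {A : Type*} [CStarAlgebra A] (h₁ h₂ : A)
    (hh₁ : IsSelfAdjoint h₁) (hh₂ : IsSelfAdjoint h₂) :
    ‖h₁ - h₂‖ * (1 - (‖h₁‖ + ‖h₂‖) / 2) ≤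
      ‖NormedSpace.exp (Complex.I • h₁) - NormedSpace.exp (Complex.I • h₂)‖ := by
  have hnorm (h : A) : ‖Complex.I • h‖ = ‖h‖ := by rw [norm_smul, Complex.norm_I, one_mul]
  have hlinear := norm_exp_sub_exp_sub_sub_le (fun t _ => norm_exp_smul_I_smul_le_one hh₁ t)
    (fun t _ => norm_exp_smul_I_smul_le_one hh₂ t)
  have htriangle := norm_le_norm_add_norm_sub'
    (Complex.I • h₁ - Complex.I • h₂) (exp (Complex.I • h₁) - exp (Complex.I • h₂))
  rw [norm_sub_rev, ← smul_sub, hnorm, hnorm, hnorm] at hlinear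
  rw [← smul_sub, hnorm] at htriangle
  linarith
end

section
/- Let A be a separable unital C*-algebra with stabilization A^s = A ⊗ K, and let e = e₁₁ be a rank-one projection. For α ∈ Aut(A^s) fixing 1⊗e, the sum v_α = Σᵢ α(1⊗e_{i1})(1⊗e_{1i}) converges strictly in M(A^s) to a unitary, and v_α(1⊗T)v_α* = α(1⊗T) for every compact operator T. -/
/-!
Put `ε i j = α (e i j)`: a second system of matrix units with `ε 0 0 = e 0 0`. The partial sums
`sₙ = ∑_{i<n} ε i 0 * e 0 i` satisfy `sₙ⋆ sₘ = p_{min n m}` and `sₙ sₘ⋆ = q_{min n m}`, where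
`p` and `q = α ∘ p` are the diagonal partial sums of `e` and `ε`, both approximate units. Hence
each `sₙ` is a partial isometry, `sₙ b` and `b sₙ` are Cauchy, and `sₙ` converges strictly to a
multiplier `v`; passing to the limit in the two identities gives `v⋆ v = 1 = v v⋆`. Finally
`sₙ e k l = ε k l sₙ` once `n > k, l`, so `v e k l = α (e k l) v`, and this extends by linearity
and continuity to the closed span of the matrix units.
-/

open Filter Topology
open scoped MultiplierAlgebra CStarAlgebra

namespace DoubleCentralizer

variable {𝕜 A : Type*} [NontriviallyNormedField 𝕜] [NonUnitalNormedRing A] [NormedSpace 𝕜 A]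
  [SMulCommClass 𝕜 A A] [IsScalarTower 𝕜 A A]

def StrictTendsto (s : ℕ → A) (v : 𝓜(𝕜, A)) : Prop :=
  (∀ b, Tendsto (fun n => s n * b) atTop (𝓝 (v.fst b))) ∧
    ∀ b, Tendsto (fun n => b * s n) atTop (𝓝 (v.snd b))

/-- By Banach–Steinhaus the pointwise limits are continuous, so no uniform bound on `s` is
needed. -/
theorem exists_strictTendsto_of_cauchySeq [CompleteSpace A] {s : ℕ → A}
    (hl : ∀ b, CauchySeq fun n => s n * b) (hr : ∀ b, CauchySeq fun n => b * s n) :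
    ∃ v : 𝓜(𝕜, A), StrictTendsto s v := by
  choose L hL using fun b => cauchySeq_tendsto_of_complete (hl b)
  choose R hR using fun b => cauchySeq_tendsto_of_complete (hr b)
  let Lc : A →L[𝕜] A := continuousLinearMapOfTendsto
    (fun n => ContinuousLinearMap.mul 𝕜 A (s n)) (tendsto_pi_nhds.2 hL)
  let Rc : A →L[𝕜] A := continuousLinearMapOfTendsto
    (fun n => (ContinuousLinearMap.mul 𝕜 A).flip (s n)) (tendsto_pi_nhds.2 hR)
  refine ⟨⟨(Lc, Rc), fun x y => ?_⟩, hL, hR⟩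
  show R x * y = x * L y
  exact tendsto_nhds_unique ((hR x).mul_const y)
    (by simpa only [mul_assoc] using (hL y).const_mul x)

theorem StrictTendsto.star [StarRing 𝕜] [StarRing A] [StarModule 𝕜 A] [NormedStarGroup A]
    {s : ℕ → A} {v : 𝓜(𝕜, A)} (h : StrictTendsto s v) :
    StrictTendsto (fun n => star (s n)) (star v) := by
  refine ⟨fun b => ?_, fun b => ?_⟩
  · simpa only [star_fst, star_mul, star_star] using (h.2 (Star.star b)).star
  · simpa only [star_snd, star_mul, star_star] using (h.1 (Star.star b)).star

theorem StrictTendsto.mul_coe_eq_coe_mul {s : ℕ → A} {v : 𝓜(𝕜, A)} (h : StrictTendsto s v)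
    {a c : A} (hac : ∀ᶠ n in atTop, s n * a = c * s n) :
    v * (a : 𝓜(𝕜, A)) = (c : 𝓜(𝕜, A)) * v := by
  refine DoubleCentralizer.ext 𝕜 A _ _ (Prod.ext (ContinuousLinearMap.ext fun b => ?_)
    (ContinuousLinearMap.ext fun b => ?_))
  · refine tendsto_nhds_unique_of_eventuallyEq (h.1 (a * b)) ((h.1 b).const_mul c) ?_
    filter_upwards [hac] with n hn
    rw [← mul_assoc, hn, mul_assoc]
  · refine tendsto_nhds_unique_of_eventuallyEq ((h.2 b).mul_const a) (h.2 (b * c)) ?_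
    filter_upwards [hac] with n hn
    rw [mul_assoc, hn, mul_assoc]

/-- `w * v` is an iterated limit of `t n * s m`, whose inner limit is eventually constant by
`hts`. -/
theorem StrictTendsto.mul_eq_one {s t u : ℕ → A} {v w : 𝓜(𝕜, A)} (hs : StrictTendsto s v)
    (ht : StrictTendsto t w) (hu : StrictTendsto u (1 : 𝓜(𝕜, A)))
    (hts : ∀ n m, t n * s m = u (min n m)) : w * v = 1 := by
  have hl : ∀ n b, t n * v.fst b = u n * b := fun n b =>
    tendsto_nhds_unique_of_eventuallyEq ((hs.1 b).const_mul (t n)) tendsto_const_nhds <| by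
      filter_upwards [eventually_ge_atTop n] with m hm
      rw [← mul_assoc, hts, min_eq_left hm]
  have hr : ∀ m b, w.snd b * s m = b * u m := fun m b =>
    tendsto_nhds_unique_of_eventuallyEq ((ht.2 b).mul_const (s m)) tendsto_const_nhds <| by
      filter_upwards [eventually_ge_atTop m] with n hn
      rw [mul_assoc, hts, min_eq_right hn]
  refine DoubleCentralizer.ext 𝕜 A _ _ (Prod.ext (ContinuousLinearMap.ext fun b => ?_)
    (ContinuousLinearMap.ext fun b => ?_))
  · exact tendsto_nhds_unique (ht.1 (v.fst b)) (by simpa only [hl] using hu.1 b)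
  · exact tendsto_nhds_unique (hs.2 (w.snd b)) (by simpa only [hr] using hu.2 b)

theorem StrictTendsto.mulEquiv_comp {u : ℕ → A} (hu : StrictTendsto u (1 : 𝓜(𝕜, A))) {α : A ≃* A}
    (hα : Continuous α) : StrictTendsto (fun n => α (u n)) (1 : 𝓜(𝕜, A)) := by
  refine ⟨fun b => ?_, fun b => ?_⟩
  · simpa [Function.comp_def, map_mul] using (hα.tendsto _).comp (hu.1 (α.symm b))
  · simpa [Function.comp_def, map_mul] using (hα.tendsto _).comp (hu.2 (α.symm b))

theorem mul_coe_eq_coe_mul_of_mem_closure_span {A F : Type*} [NonUnitalCStarAlgebra A]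
    [FunLike F A A] [NonUnitalAlgHomClass F ℂ A A] [StarHomClass F A A] (v : 𝓜(ℂ, A)) (α : F)
    {S : Set A} (h : ∀ x ∈ S, v * (x : 𝓜(ℂ, A)) = (α x : 𝓜(ℂ, A)) * v) :
    ∀ x ∈ closure (Submodule.span ℂ S : Set A), v * (x : 𝓜(ℂ, A)) = (α x : 𝓜(ℂ, A)) * v := by
  let ι : A →L[ℂ] 𝓜(ℂ, A) := ⟨(coeHom : A →⋆ₙₐ[ℂ] 𝓜(ℂ, A)), map_continuous _⟩
  exact ContinuousLinearMap.eqOn_closure_span (f := (ContinuousLinearMap.mul ℂ _ v).comp ι)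
    (g := ((ContinuousLinearMap.mul ℂ 𝓜(ℂ, A)).flip v).comp
      (ι.comp ⟨(α : A →ₗ[ℂ] A), map_continuous α⟩))
    fun x hx => h x hx

end DoubleCentralizer

theorem cauchySeq_of_dist_le_mul {α β : Type*} [PseudoMetricSpace α] [PseudoMetricSpace β]
    {f : ℕ → α} {g : ℕ → β} (K : ℝ)
    (h : ∀ n m, n ≤ m → dist (f m) (f n) ≤ K * dist (g m) (g n)) (hg : CauchySeq g) :
    CauchySeq f := by
  rw [cauchySeq_iff_tendsto_dist_atTop_0] at hg ⊢
  refine squeeze_zero (fun _ => dist_nonneg) (fun p => ?_) (by simpa using hg.const_mul K)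
  rcases le_total p.1 p.2 with hp | hp
  · rw [dist_comm, dist_comm (g p.1)]
    exact h _ _ hp
  · exact h _ _ hp

section CauchySeq

variable {A : Type*} [NonUnitalSeminormedRing A] {s p : ℕ → A} {C : ℝ}

theorem cauchySeq_mul_const_of_mul_eq_min (hs : ∀ n, ‖s n‖ ≤ C)
    (hsp : ∀ n m, s n * p m = s (min n m)) {b : A} (hb : CauchySeq fun n => p n * b) :
    CauchySeq fun n => s n * b := by
  refine cauchySeq_of_dist_le_mul (2 * C) (fun n m hnm => ?_) hb
  have key : s m * b - s n * b = (s m - s n) * (p m * b - p n * b) := by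
    simp only [sub_mul, mul_sub, ← mul_assoc, hsp, min_self, min_eq_left hnm, min_eq_right hnm]
    abel
  rw [dist_eq_norm, dist_eq_norm, key]
  calc ‖(s m - s n) * (p m * b - p n * b)‖ ≤ ‖s m - s n‖ * ‖p m * b - p n * b‖ :=
        norm_mul_le _ _
    _ ≤ 2 * C * ‖p m * b - p n * b‖ := by
      gcongr
      linarith [norm_sub_le (s m) (s n), hs m, hs n]

theorem cauchySeq_const_mul_of_mul_eq_min (hs : ∀ n, ‖s n‖ ≤ C)
    (hps : ∀ n m, p n * s m = s (min n m)) {b : A} (hb : CauchySeq fun n => b * p n) :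
    CauchySeq fun n => b * s n := by
  refine cauchySeq_of_dist_le_mul (2 * C) (fun n m hnm => ?_) hb
  have key : b * s m - b * s n = (b * p m - b * p n) * (s m - s n) := by
    simp only [sub_mul, mul_sub, mul_assoc, hps, min_self, min_eq_left hnm, min_eq_right hnm]
    abel
  rw [dist_eq_norm, dist_eq_norm, key]
  calc ‖(b * p m - b * p n) * (s m - s n)‖ ≤ ‖b * p m - b * p n‖ * ‖s m - s n‖ :=
        norm_mul_le _ _
    _ ≤ 2 * C * ‖b * p m - b * p n‖ := by
      rw [mul_comm (2 * C)]
      gcongr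
      linarith [norm_sub_le (s m) (s n), hs m, hs n]

end CauchySeq

open Finset

theorem Finset.sum_range_mul_sum_range_of_mul_eq_ite {B : Type*} [NonUnitalNonAssocSemiring B]
    {f g h : ℕ → B} (hfg : ∀ i j, f i * g j = if i = j then h i else 0) (n m : ℕ) :
    (∑ i ∈ range n, f i) * ∑ j ∈ range m, g j = ∑ i ∈ range (min n m), h i := by
  simp only [sum_mul_sum, hfg, sum_ite_eq, sum_ite_mem, range_inter_range]

structure IsMatrixUnits {B : Type*} [Mul B] [Zero B] [Star B] (e : ℕ → ℕ → B) : Prop where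
  mul_eq : ∀ i j k l, e i j * e k l = if j = k then e i l else 0
  star_eq : ∀ i j, star (e i j) = e j i

theorem IsMatrixUnits.map {B C F : Type*} [NonUnitalNonAssocSemiring B] [Star B]
    [NonUnitalNonAssocSemiring C] [Star C] [FunLike F B C] [NonUnitalRingHomClass F B C]
    [StarHomClass F B C] {e : ℕ → ℕ → B} (he : IsMatrixUnits e) (φ : F) :
    IsMatrixUnits fun i j => φ (e i j) where
  mul_eq i j k l := by rw [← map_mul, he.mul_eq]; split_ifs <;> simp
  star_eq i j := by rw [← map_star, he.star_eq]

namespace IsMatrixUnits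

section Sums

variable {B : Type*} [NonUnitalSemiring B]

def diagSum (e : ℕ → ℕ → B) (n : ℕ) : B := ∑ i ∈ range n, e i i

/-- The partial sums of `v_α = ∑ᵢ α(e i 0) e 0 i`, for `ε = α ∘ e`. -/
def intertwinerSum (ε e : ℕ → ℕ → B) (n : ℕ) : B := ∑ i ∈ range n, ε i 0 * e 0 i

theorem diagSum_map {C F : Type*} [NonUnitalSemiring C] [FunLike F B C]
    [AddMonoidHomClass F B C] (φ : F) (e : ℕ → ℕ → B) :
    (diagSum fun i j => φ (e i j)) = fun n => φ (diagSum e n) := by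
  ext n
  simp only [diagSum, map_sum]

variable [StarRing B] {e ε : ℕ → ℕ → B}

theorem isStarProjection_diagSum (he : IsMatrixUnits e) (n : ℕ) :
    IsStarProjection (diagSum e n) where
  isIdempotentElem := by
    rw [IsIdempotentElem, diagSum, sum_range_mul_sum_range_of_mul_eq_ite (h := fun i => e i i)
      (fun i j => by rw [he.mul_eq]; split_ifs with h <;> simp [h]), min_self]
  isSelfAdjoint := by simp only [IsSelfAdjoint, diagSum, star_sum, he.star_eq]

theorem star_intertwinerSum (he : IsMatrixUnits e) (hε : IsMatrixUnits ε) (n : ℕ) :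
    star (intertwinerSum ε e n) = intertwinerSum e ε n := by
  simp only [intertwinerSum, star_sum, star_mul, he.star_eq, hε.star_eq]

theorem intertwinerSum_mul_intertwinerSum (he : IsMatrixUnits e) (hε : IsMatrixUnits ε)
    (h00 : ε 0 0 = e 0 0) (n m : ℕ) :
    intertwinerSum ε e n * intertwinerSum e ε m = diagSum ε (min n m) := by
  refine sum_range_mul_sum_range_of_mul_eq_ite (fun i j => ?_) n m
  rw [mul_assoc, ← mul_assoc (e 0 i), he.mul_eq]
  split_ifs with h
  · rw [← h00, hε.mul_eq, if_pos rfl, hε.mul_eq, if_pos rfl, h]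
  · rw [zero_mul, mul_zero]

theorem intertwinerSum_mul_diagSum (he : IsMatrixUnits e) (n m : ℕ) :
    intertwinerSum ε e n * diagSum e m = intertwinerSum ε e (min n m) := by
  refine sum_range_mul_sum_range_of_mul_eq_ite (fun i j => ?_) n m
  rw [mul_assoc, he.mul_eq]
  split_ifs with h
  · rw [h]
  · rw [mul_zero]

theorem diagSum_mul_intertwinerSum (hε : IsMatrixUnits ε) (n m : ℕ) :
    diagSum ε n * intertwinerSum ε e m = intertwinerSum ε e (min n m) := by
  refine sum_range_mul_sum_range_of_mul_eq_ite (fun i j => ?_) n m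
  rw [← mul_assoc, hε.mul_eq]
  split_ifs with h
  · rw [h]
  · rw [zero_mul]

theorem intertwinerSum_mul_eq_mul_intertwinerSum (he : IsMatrixUnits e) (hε : IsMatrixUnits ε)
    {k l n : ℕ} (hk : k < n) (hl : l < n) :
    intertwinerSum ε e n * e k l = ε k l * intertwinerSum ε e n := by
  have left : intertwinerSum ε e n * e k l = ε k 0 * e 0 l := by
    simp only [intertwinerSum, sum_mul, mul_assoc, he.mul_eq, mul_ite, mul_zero,
      sum_ite_eq', mem_range, if_pos hk]
  have right : ε k l * intertwinerSum ε e n = ε k 0 * e 0 l := by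
    simp only [intertwinerSum, mul_sum, ← mul_assoc, hε.mul_eq, ite_mul, zero_mul,
      sum_ite_eq, mem_range, if_pos hl]
  rw [left, right]

end Sums

theorem norm_intertwinerSum_le_one {B : Type*} [NonUnitalNormedRing B] [StarRing B]
    [CStarRing B] {e ε : ℕ → ℕ → B} (he : IsMatrixUnits e) (hε : IsMatrixUnits ε)
    (h00 : ε 0 0 = e 0 0) (n : ℕ) : ‖intertwinerSum ε e n‖ ≤ 1 := by
  have h := CStarRing.norm_star_mul_self (x := intertwinerSum ε e n)
  rw [star_intertwinerSum he hε, intertwinerSum_mul_intertwinerSum hε he h00.symm, min_self] at h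
  nlinarith [norm_nonneg (intertwinerSum ε e n), (isStarProjection_diagSum he n).norm_le]

end IsMatrixUnits

theorem stmt14_general {B : Type*} [NonUnitalCStarAlgebra B]
    (e : ℕ → ℕ → B)
    (hmul : ∀ i j k l, e i j * e k l = if j = k then e i l else 0)
    (hstar : ∀ i j, star (e i j) = e j i)
    (happrox : ∀ b : B,
      Tendsto (fun n => b * ∑ i ∈ Finset.range n, e i i) atTop (nhds b) ∧
      Tendsto (fun n => (∑ i ∈ Finset.range n, e i i) * b) atTop (nhds b))
    (α : B ≃⋆ₐ[ℂ] B) (hα : α (e 0 0) = e 0 0) :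
    (∀ n, ‖∑ i ∈ Finset.range n, α (e i 0) * e 0 i‖ ≤ 1) ∧
    ∃ v : DoubleCentralizer ℂ B, v ∈ unitary (DoubleCentralizer ℂ B) ∧
      (∀ b : B, Tendsto (fun n => (∑ i ∈ Finset.range n, α (e i 0) * e 0 i) * b)
        atTop (nhds (v.fst b))) ∧
      (∀ b : B, Tendsto (fun n => b * ∑ i ∈ Finset.range n, α (e i 0) * e 0 i)
        atTop (nhds (v.snd b))) ∧
      ∀ x ∈ closure (Submodule.span ℂ (Set.range fun p : ℕ × ℕ => e p.1 p.2) : Set B),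
        v * (x : DoubleCentralizer ℂ B) * star v = ((α x : B) : DoubleCentralizer ℂ B) := by
  have he : IsMatrixUnits e := ⟨hmul, hstar⟩
  have hε := he.map α
  have hp : DoubleCentralizer.StrictTendsto (IsMatrixUnits.diagSum e) (1 : 𝓜(ℂ, B)) :=
    ⟨fun b => (happrox b).2, fun b => (happrox b).1⟩
  have hq : DoubleCentralizer.StrictTendsto (IsMatrixUnits.diagSum fun i j => α (e i j))
      (1 : 𝓜(ℂ, B)) := by
    rw [IsMatrixUnits.diagSum_map]
    exact hp.mulEquiv_comp (α := (α : B ≃* B)) (map_continuous α)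
  have hnorm := he.norm_intertwinerSum_le_one hε hα
  obtain ⟨v, hv⟩ := DoubleCentralizer.exists_strictTendsto_of_cauchySeq (𝕜 := ℂ)
    (fun b => cauchySeq_mul_const_of_mul_eq_min hnorm he.intertwinerSum_mul_diagSum
      (hp.1 b).cauchySeq)
    (fun b => cauchySeq_const_mul_of_mul_eq_min hnorm hε.diagSum_mul_intertwinerSum
      (hq.2 b).cauchySeq)
  have hunit : v ∈ unitary 𝓜(ℂ, B) := Unitary.mem_iff.2
    ⟨hv.mul_eq_one hv.star hp fun n m => by
        rw [he.star_intertwinerSum hε, hε.intertwinerSum_mul_intertwinerSum he hα.symm],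
      hv.star.mul_eq_one hv hq fun n m => by
        rw [he.star_intertwinerSum hε, he.intertwinerSum_mul_intertwinerSum hε hα]⟩
  have hcomm := DoubleCentralizer.mul_coe_eq_coe_mul_of_mem_closure_span v α
    (S := Set.range fun p : ℕ × ℕ => e p.1 p.2) <| by
      rintro _ ⟨⟨k, l⟩, rfl⟩
      refine hv.mul_coe_eq_coe_mul ((eventually_gt_atTop (max k l)).mono fun n hn => ?_)
      exact he.intertwinerSum_mul_eq_mul_intertwinerSum hε (le_max_left k l |>.trans_lt hn)
        (le_max_right k l |>.trans_lt hn)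
  refine ⟨hnorm, v, hunit, hv.1, hv.2, fun x hx => ?_⟩
  rw [hcomm x hx, mul_assoc, Unitary.mul_star_self_of_mem hunit, mul_one]

/-- Lemma `lem:alpha_on_cpts`. We model the stabilization
`A^s = A ⊗ K` of a separable unital C*-algebra `A` by a (non-unital) C*-algebra `B`
equipped with a system `e i j` of matrix units corresponding to `1 ⊗ e_{ij}`, whose
partial sums `1 ⊗ pₙ = Σ_{i<n} e i i` form an approximate unit of `B`.  For an
automorphism `α` of `B` fixing `1 ⊗ e = e 0 0`, the partial sums
`Σ_{i<n} α(e i 0)·(e 0 i)` are uniformly bounded and converge strictly in the multiplier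
algebra `M(B)` to a unitary `v`, and `v (1⊗T) v* = α(1⊗T)` for every `T` compact, i.e.
for every element of the closed linear span of the matrix units. -/
theorem stmt14 {B : Type*} [NonUnitalCStarAlgebra B]
    [StarModule ℂ B] [TopologicalSpace.SeparableSpace B]
    (e : ℕ → ℕ → B)
    (hmul : ∀ i j k l, e i j * e k l = if j = k then e i l else 0)
    (hstar : ∀ i j, star (e i j) = e j i)
    (happrox : ∀ b : B,
      Tendsto (fun n => b * ∑ i ∈ Finset.range n, e i i) atTop (nhds b) ∧
      Tendsto (fun n => (∑ i ∈ Finset.range n, e i i) * b) atTop (nhds b))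
    (α : B ≃⋆ₐ[ℂ] B) (hα : α (e 0 0) = e 0 0) :
    (∀ n, ‖∑ i ∈ Finset.range n, α (e i 0) * e 0 i‖ ≤ 1) ∧
    ∃ v : DoubleCentralizer ℂ B, v ∈ unitary (DoubleCentralizer ℂ B) ∧
      (∀ b : B, Tendsto (fun n => (∑ i ∈ Finset.range n, α (e i 0) * e 0 i) * b)
        atTop (nhds (v.fst b))) ∧
      (∀ b : B, Tendsto (fun n => b * ∑ i ∈ Finset.range n, α (e i 0) * e 0 i)
        atTop (nhds (v.snd b))) ∧
      ∀ x ∈ closure (Submodule.span ℂ (Set.range fun p : ℕ × ℕ => e p.1 p.2) : Set B),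
        v * (x : DoubleCentralizer ℂ B) * star v = ((α x : B) : DoubleCentralizer ℂ B) :=
  stmt14_general e hmul hstar happrox α hα
end
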